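/- Exact marginal likelihood for the toy univariate Gaussian mixture (Theorem in Supplement C): consider the model Y_1,…,Y_n | μ i.i.d. ~ Σ_{g=1}^{G} (1/G) N(μ_g, 1) with prior μ_1,…,μ_G i.i.d. standard normal (and σ_g = 1, τ_g = 1/G fixed). Then the marginal likelihood equals p(Y) = G^{−n} Σ_{C} MVN_n(Y; 0_n, I_n + O(C)), where the sum ranges over all allocation matrices C ∈ {0,1}^{n×G} with each row summing to 1, and O(C) is the n×n matrix with O(C)_{ij} = 1 if C_i = C_j and 0 otherwise; here MVN_n(Y; m, Σ) denotes the n-dimensional Gaussian density with mean m and covariance Σ evaluated at Y. -/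

import Mathlib

open MeasureTheory Matrix

/-- The `n`-dimensional Gaussian density with mean `m` and covariance `S`:
`MVN_n(y; m, S) = (2π)^{−n/2} det(S)^{−1/2} exp(−(y−m)ᵀS⁻¹(y−m)/2)`. -/
noncomputable def mvnPdf {n : ℕ} (m : Fin n → ℝ) (S : Matrix (Fin n) (Fin n) ℝ)
    (y : Fin n → ℝ) : ℝ :=
  (2 * Real.pi) ^ (-(n : ℝ) / 2) * S.det ^ (-(1 : ℝ) / 2) *
    Real.exp (-((y - m) ⬝ᵥ (S⁻¹ *ᵥ (y - m))) / 2)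

/-!
Expanding the product of mixture densities writes `p(Y | μ) π(μ)` as
`G⁻ⁿ ∑_c ∏_g φ(μ_g) ∏_{c i = g} φ(Y_i - μ_g)`, so for each allocation `c` the integral over `μ`
splits into one integral per cluster. Completing the square in `μ_g` (prior × likelihood =
evidence × Gaussian posterior) evaluates each of them in closed form.

On the other side `I + O(c) = I + A Aᵀ` for the allocation matrix `A`, and `Aᵀ A` is the diagonal
matrix of cluster sizes `k_g`. Hence `det (I + O(c)) = ∏_g (1 + k_g)` and, by Woodbury,
`(I + O(c))⁻¹ = I - A diag(1 / (1 + k_g)) Aᵀ`, so `MVN_n(Y; 0, I + O(c))` factors over the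
clusters into the same closed forms.
-/

open Real Finset ProbabilityTheory

theorem prod_sum_mul_prod_eq_sum_prod_fiber {ι κ R : Type*} [Fintype ι] [DecidableEq ι]
    [Fintype κ] [DecidableEq κ] [CommSemiring R] (f : ι → κ → R) (h : κ → R) :
    (∏ i, ∑ g, f i g) * ∏ g, h g = ∑ c : ι → κ, ∏ g, (h g * ∏ i with c i = g, f i g) := by
  rw [Fintype.prod_sum, sum_mul]
  refine sum_congr rfl fun c _ => ?_
  rw [← prod_fiberwise univ c fun i => f i (c i), ← prod_mul_distrib]
  refine prod_congr rfl fun g _ => ?_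
  rw [mul_comm]
  exact congrArg _ <| prod_congr rfl fun i hi => by rw [(mem_filter.1 hi).2]

noncomputable def stdNormalPdf (x : ℝ) : ℝ := exp (-x ^ 2 / 2) / √(2 * π)

/-- The density of the observations `y_s` of one cluster once its `N(0, 1)` mean is integrated
out, i.e. `MVN(y_s; 0, I + 𝟙𝟙ᵀ)`. -/
noncomputable def clusterMarginal {ι : Type*} (s : Finset ι) (y : ι → ℝ) : ℝ :=
  exp (-(∑ i ∈ s, y i ^ 2 - (∑ i ∈ s, y i) ^ 2 / (1 + #s)) / 2) / (√(2 * π) ^ #s * √(1 + #s))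

theorem stdNormalPdf_mul_prod_stdNormalPdf_sub {ι : Type*} (s : Finset ι) (y : ι → ℝ) (t : ℝ) :
    stdNormalPdf t * ∏ i ∈ s, stdNormalPdf (y i - t)
      = clusterMarginal s y * gaussianPDFReal ((∑ i ∈ s, y i) / (1 + #s)) (1 + #s)⁻¹ t := by
  unfold stdNormalPdf clusterMarginal gaussianPDFReal
  simp only [NNReal.coe_inv, NNReal.coe_add, NNReal.coe_one, NNReal.coe_natCast]
  set k : ℝ := (#s : ℝ)
  set S := ∑ i ∈ s, y i
  set Q := ∑ i ∈ s, y i ^ 2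
  have hk : 0 < 1 + k := by positivity
  have hsq : ∑ i ∈ s, (y i - t) ^ 2 = Q - 2 * S * t + k * t ^ 2 := by
    simp only [sub_sq, sum_add_distrib, sum_sub_distrib, ← sum_mul, ← mul_sum, sum_const,
      nsmul_eq_mul, S, Q, k]
  have hexp : -t ^ 2 / 2 + -(Q - 2 * S * t + k * t ^ 2) / 2
      = -(Q - S ^ 2 / (1 + k)) / 2 + -(t - S / (1 + k)) ^ 2 / (2 * (1 + k)⁻¹) := by
    field_simp
    ring
  rw [prod_div_distrib, prod_const, ← exp_sum, ← sum_div, sum_neg_distrib, hsq,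
    sqrt_mul (x := 2 * π) (by positivity), sqrt_inv]
  calc _ = exp (-t ^ 2 / 2 + -(Q - 2 * S * t + k * t ^ 2) / 2) / (√(2 * π) * √(2 * π) ^ #s) := by
        rw [exp_add]; ring
    _ = _ := by
      rw [hexp, exp_add]
      field_simp

theorem integrable_stdNormalPdf_mul_prod_stdNormalPdf_sub {ι : Type*} (s : Finset ι)
    (y : ι → ℝ) : Integrable fun t => stdNormalPdf t * ∏ i ∈ s, stdNormalPdf (y i - t) := by
  simp_rw [stdNormalPdf_mul_prod_stdNormalPdf_sub]
  exact (integrable_gaussianPDFReal _ _).const_mul _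

theorem integral_stdNormalPdf_mul_prod_stdNormalPdf_sub {ι : Type*} (s : Finset ι) (y : ι → ℝ) :
    ∫ t, stdNormalPdf t * ∏ i ∈ s, stdNormalPdf (y i - t) = clusterMarginal s y := by
  simp_rw [stdNormalPdf_mul_prod_stdNormalPdf_sub]
  rw [integral_const_mul, integral_gaussianPDFReal_eq_one _ (inv_ne_zero (by positivity)),
    mul_one]

theorem Matrix.inv_one_add_mul {m n α : Type*} [Fintype m] [DecidableEq m] [Fintype n]
    [DecidableEq n] [CommRing α] (A : Matrix m n α) (B : Matrix n m α) (h : IsUnit (1 + B * A)) :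
    (1 + A * B)⁻¹ = 1 - A * (1 + B * A)⁻¹ * B := by
  simpa using add_mul_mul_inv_eq_sub 1 A 1 B isUnit_one isUnit_one (by simpa using h)

section Allocation

variable {ι κ : Type*} [DecidableEq κ]

def allocationMatrix (c : ι → κ) : Matrix ι κ ℝ := of fun i g => if c i = g then 1 else 0

theorem allocationMatrix_mul_transpose_apply [Fintype κ] (c : ι → κ) (i j : ι) :
    (allocationMatrix c * (allocationMatrix c)ᵀ) i j = if c i = c j then 1 else 0 := by
  simp [allocationMatrix, mul_apply, eq_comm]

theorem transpose_allocationMatrix_mulVec [Fintype ι] (c : ι → κ) (y : ι → ℝ) :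
    (allocationMatrix c)ᵀ *ᵥ y = fun g => ∑ i with c i = g, y i := by
  ext g
  simp [allocationMatrix, mulVec, dotProduct, sum_filter]

theorem transpose_allocationMatrix_mul_self [Fintype ι] (c : ι → κ) :
    (allocationMatrix c)ᵀ * allocationMatrix c = diagonal fun g => (#{i | c i = g} : ℝ) := by
  ext g h
  simp only [allocationMatrix, mul_apply, transpose_apply, of_apply, mul_boole, diagonal_apply,
    ← ite_and]
  by_cases hgh : g = h
  · simp [hgh, sum_boole]
  · simp only [hgh, if_false]
    exact sum_eq_zero fun i _ => if_neg fun hi => hgh (hi.2.symm.trans hi.1)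

theorem one_add_transpose_allocationMatrix_mul_self [Fintype ι] (c : ι → κ) :
    1 + (allocationMatrix c)ᵀ * allocationMatrix c
      = diagonal fun g => 1 + (#{i | c i = g} : ℝ) := by
  rw [transpose_allocationMatrix_mul_self, ← diagonal_one, diagonal_add]

variable [Fintype ι] [DecidableEq ι] [Fintype κ]

theorem det_one_add_allocationMatrix_mul_transpose (c : ι → κ) :
    (1 + allocationMatrix c * (allocationMatrix c)ᵀ).det = ∏ g, (1 + #{i | c i = g} : ℝ) := by
  rw [det_one_add_mul_comm, one_add_transpose_allocationMatrix_mul_self, det_diagonal]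

theorem dotProduct_inv_one_add_allocationMatrix_mul_transpose_mulVec (c : ι → κ)
    (y : ι → ℝ) :
    y ⬝ᵥ ((1 + allocationMatrix c * (allocationMatrix c)ᵀ)⁻¹ *ᵥ y)
      = ∑ g, (∑ i with c i = g, y i ^ 2 - (∑ i with c i = g, y i) ^ 2 / (1 + #{i | c i = g})) := by
  have hsizes : ∀ g, (1 + (#{i | c i = g} : ℝ)) ≠ 0 := fun g => by positivity
  have hunit : IsUnit (1 + (allocationMatrix c)ᵀ * allocationMatrix c) := by
    rw [one_add_transpose_allocationMatrix_mul_self, isUnit_diagonal, Pi.isUnit_iff]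
    exact fun g => (hsizes g).isUnit
  have hdiag_inv : (diagonal fun g => 1 + (#{i | c i = g} : ℝ))⁻¹
      = diagonal fun g => (1 + (#{i | c i = g} : ℝ))⁻¹ :=
    inv_eq_left_inv <| by
      rw [diagonal_mul_diagonal, ← diagonal_one]
      exact congrArg diagonal (funext fun g => inv_mul_cancel₀ (hsizes g))
  rw [inv_one_add_mul _ _ hunit, one_add_transpose_allocationMatrix_mul_self, hdiag_inv,
    sub_mulVec, one_mulVec, ← mulVec_mulVec, ← mulVec_mulVec, dotProduct_sub, dotProduct_mulVec,
    ← mulVec_transpose, transpose_allocationMatrix_mulVec, sum_sub_distrib, sum_fiberwise]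
  simp only [dotProduct, mulVec_diagonal, sq]
  congr 1
  exact sum_congr rfl fun g _ => by ring

end Allocation

theorem mvnPdf_zero_one_add_allocationMatrix_mul_transpose {n : ℕ} {κ : Type*} [Fintype κ]
    [DecidableEq κ] (c : Fin n → κ) (y : Fin n → ℝ) :
    mvnPdf 0 (1 + allocationMatrix c * (allocationMatrix c)ᵀ) y
      = ∏ g, clusterMarginal {i | c i = g} y := by
  have hn : ∑ g, #{i | c i = g} = n := by
    simpa using (card_eq_sum_card_fiberwise (s := univ) fun i _ => mem_univ (c i)).symm
  unfold mvnPdf clusterMarginal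
  rw [sub_zero, det_one_add_allocationMatrix_mul_transpose,
    dotProduct_inv_one_add_allocationMatrix_mul_transpose_mulVec,
    rpow_div_two_eq_sqrt _ (by positivity), rpow_div_two_eq_sqrt _ (by positivity),
    rpow_neg (by positivity), rpow_natCast, rpow_neg_one, sqrt_prod _ fun g _ => by positivity,
    prod_div_distrib, prod_mul_distrib, ← exp_sum, prod_pow_eq_pow_sum, hn, ← sum_div,
    ← sum_neg_distrib, div_eq_mul_inv _ (_ * _), mul_inv]
  ring

theorem exact_marginal_likelihood_toy_gaussian_mixture_general
    {n G : ℕ}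
    (Y : Fin n → ℝ)
    (O : (Fin n → Fin G) → Matrix (Fin n) (Fin n) ℝ)
    (hO : ∀ c i j, O c i j = if c i = c j then (1 : ℝ) else 0) :
    ∫ μ : Fin G → ℝ,
        (∏ i, ∑ g, (1 / (G : ℝ)) *
            (Real.exp (-(Y i - μ g) ^ 2 / 2) / Real.sqrt (2 * Real.pi))) *
          ∏ g, Real.exp (-(μ g) ^ 2 / 2) / Real.sqrt (2 * Real.pi)
      = (1 / (G : ℝ) ^ n) * ∑ c : Fin n → Fin G, mvnPdf 0 (1 + O c) Y := by
  have hO_eq : ∀ c, O c = allocationMatrix c * (allocationMatrix c)ᵀ := fun c => by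
    ext i j
    rw [hO, allocationMatrix_mul_transpose_apply]
  have hjoint : ∀ μ : Fin G → ℝ,
      (∏ i, ∑ g, 1 / (G : ℝ) * stdNormalPdf (Y i - μ g)) * ∏ g, stdNormalPdf (μ g)
        = 1 / (G : ℝ) ^ n * ∑ c : Fin n → Fin G,
            ∏ g, (stdNormalPdf (μ g) * ∏ i with c i = g, stdNormalPdf (Y i - μ g)) := by
    intro μ
    simp only [← mul_sum]
    rw [prod_mul_distrib, prod_const, card_univ, Fintype.card_fin, _root_.one_div_pow, mul_assoc,
      prod_sum_mul_prod_eq_sum_prod_fiber]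
  change ∫ μ : Fin G → ℝ, (∏ i, ∑ g, 1 / (G : ℝ) * stdNormalPdf (Y i - μ g)) *
    ∏ g, stdNormalPdf (μ g) = _
  simp_rw [hjoint, hO_eq, mvnPdf_zero_one_add_allocationMatrix_mul_transpose]
  rw [integral_const_mul, integral_finsetSum (μ := volume) _ fun c _ =>
    Integrable.fintype_prod fun g => integrable_stdNormalPdf_mul_prod_stdNormalPdf_sub _ Y]
  congr 1
  refine sum_congr rfl fun c _ => ?_
  rw [integral_fintype_prod_volume_eq_prod
    (fun g t => stdNormalPdf t * ∏ i with c i = g, stdNormalPdf (Y i - t))]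
  exact prod_congr rfl fun g _ => integral_stdNormalPdf_mul_prod_stdNormalPdf_sub _ Y

/-- Exact marginal likelihood for the toy univariate Gaussian mixture (Theorem in
Supplement C): for the model `Y₁,…,Yₙ | μ i.i.d. ~ ∑_g (1/G) N(μ_g, 1)` with prior
`μ₁,…,μ_G` i.i.d. standard normal, the marginal likelihood
`p(Y) = ∫ p(Y|μ) π(μ) dμ` equals `G^{−n} ∑_C MVN_n(Y; 0, I_n + O(C))`, where the sum
ranges over all allocation configurations `c : Fin n → Fin G` (one-hot allocation
matrices) and `O(c)_{ij} = 1` if `c i = c j` and `0` otherwise. -/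
theorem exact_marginal_likelihood_toy_gaussian_mixture
    {n G : ℕ} (hG : 0 < G)
    (Y : Fin n → ℝ)
    (O : (Fin n → Fin G) → Matrix (Fin n) (Fin n) ℝ)
    (hO : ∀ c i j, O c i j = if c i = c j then (1 : ℝ) else 0) :
    ∫ μ : Fin G → ℝ,
        (∏ i, ∑ g, (1 / (G : ℝ)) *
            (Real.exp (-(Y i - μ g) ^ 2 / 2) / Real.sqrt (2 * Real.pi))) *
          ∏ g, Real.exp (-(μ g) ^ 2 / 2) / Real.sqrt (2 * Real.pi)
      = (1 / (G : ℝ) ^ n) * ∑ c : Fin n → Fin G, mvnPdf 0 (1 + O c) Y :=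
  exact_marginal_likelihood_toy_gaussian_mixture_general Y O hO
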